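/- Let (P; ⊕, 0, 1) be a lattice-ordered pseudo-effect algebra with Sasaki operations a∘b := (a∧b⁻)∕a and a∗b := a∖(a∧b~). Two elements a, b of P are compatible (i.e., (a∨b)∖a = b∖(a∧b) and (a∨b)∖b = a∖(a∧b)) if and only if they pseudocommute, i.e., b∗a⁻ = a⁻∘b and a∗b⁻ = b⁻∘a. -/
import Mathlib


/-- A pseudo-effect algebra: a set with a partial binary operation ⊕ (encoded by a
definedness predicate `defd` and a total function `padd`) and constants `zero`, `one`,
satisfying axioms (PE1)-(PE4). -/
class PseudoEffectAlgebra (P : Type*) where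
  defd : P → P → Prop
  padd : P → P → P
  zero : P
  one : P
  pe1_defined : ∀ a b c : P,
    (defd a b ∧ defd (padd a b) c) ↔ (defd b c ∧ defd a (padd b c))
  pe1_assoc : ∀ a b c : P, defd a b → defd (padd a b) c →
    padd (padd a b) c = padd a (padd b c)
  pe2_right : ∀ a : P, ∃! d : P, defd a d ∧ padd a d = one
  pe2_left : ∀ a : P, ∃! e : P, defd e a ∧ padd e a = one
  pe3 : ∀ a b : P, defd a b → ∃ d e : P, defd d a ∧ defd b e ∧
    padd a b = padd d a ∧ padd a b = padd b e
  pe4_right : ∀ a : P, defd a one → a = zero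
  pe4_left : ∀ a : P, defd one a → a = zero

namespace PseudoEffectAlgebra

variable {P : Type*} [PseudoEffectAlgebra P]

/-- The order induced by ⊕: a ≤ b iff c⊕a = b for some c. -/
def ple (a b : P) : Prop := ∃ c : P, defd c a ∧ padd c a = b

/-- The "left" subtraction: b∖a is the element x with x⊕a = b (defined iff a ≤ b). -/
noncomputable def rsub (b a : P) : P :=
  @Classical.epsilon P ⟨zero⟩ (fun x => defd x a ∧ padd x a = b)

/-- The "right" subtraction: a∕b is the element y with a⊕y = b (defined iff a ≤ b). -/
noncomputable def ldiv (a b : P) : P :=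
  @Classical.epsilon P ⟨zero⟩ (fun y => defd a y ∧ padd a y = b)

/-- The left complement a⁻ := 1∖a. -/
noncomputable def lcompl (a : P) : P := rsub one a

/-- The right complement a~ := a∕1. -/
noncomputable def rcompl (a : P) : P := ldiv a one

end PseudoEffectAlgebra

open PseudoEffectAlgebra

/-- A lattice pseudo-effect algebra: a pseudo-effect algebra whose induced order is a
lattice. -/
class LatticePseudoEffectAlgebra (P : Type*) extends Lattice P, PseudoEffectAlgebra P where
  le_iff : ∀ a b : P, a ≤ b ↔ ∃ c : P, defd c a ∧ padd c a = b

namespace LatticePseudoEffectAlgebra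

variable {P : Type*} [LatticePseudoEffectAlgebra P]

/-- The "right" Sasaki product a∘b := (a∧b⁻)∕a. -/
noncomputable def scirc (a b : P) : P := ldiv (a ⊓ lcompl b) a

/-- The "left" Sasaki product a∗b := a∖(a∧b~). -/
noncomputable def scstar (a b : P) : P := rsub a (a ⊓ rcompl b)

end LatticePseudoEffectAlgebra

open LatticePseudoEffectAlgebra

section Aux

variable {P : Type*} [PseudoEffectAlgebra P]

lemma pea_cancel_right {x y a : P} (hx : defd x a) (hy : defd y a)
    (h : padd x a = padd y a) : x = y := by
  obtain ⟨t, ⟨ht, h1⟩, _⟩ := pe2_right (padd x a)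
  have ht' : defd (padd y a) t := h ▸ ht
  have hx' := (pe1_defined x a t).mp ⟨hx, ht⟩
  have hy' := (pe1_defined y a t).mp ⟨hy, ht'⟩
  have ex : padd x (padd a t) = one := by
    rw [← pe1_assoc x a t hx ht, h1]
  have ey : padd y (padd a t) = one := by
    rw [← pe1_assoc y a t hy ht', ← h, h1]
  obtain ⟨e, _, hu⟩ := pe2_left (padd a t)
  exact (hu x ⟨hx'.2, ex⟩).trans (hu y ⟨hy'.2, ey⟩).symm

lemma pea_cancel_left {x y a : P} (hx : defd a x) (hy : defd a y)
    (h : padd a x = padd a y) : x = y := by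
  obtain ⟨s, ⟨hs, h1⟩, _⟩ := pe2_left (padd a x)
  have hs' : defd s (padd a y) := h ▸ hs
  have hx' := (pe1_defined s a x).mpr ⟨hx, hs⟩
  have hy' := (pe1_defined s a y).mpr ⟨hy, hs'⟩
  have ex : padd (padd s a) x = one := by rw [pe1_assoc s a x hx'.1 hx'.2, h1]
  have ey : padd (padd s a) y = one := by rw [pe1_assoc s a y hy'.1 hy'.2, ← h, h1]
  obtain ⟨d, _, hu⟩ := pe2_right (padd s a)
  exact (hu x ⟨hx'.2, ex⟩).trans (hu y ⟨hy'.2, ey⟩).symm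

lemma rsub_spec {a b : P} (h : ple a b) :
    defd (rsub b a) a ∧ padd (rsub b a) a = b :=
  Classical.epsilon_spec h

lemma rsub_eq {x a b : P} (hd : defd x a) (he : padd x a = b) : rsub b a = x := by
  have h := rsub_spec (⟨x, hd, he⟩ : ple a b)
  exact pea_cancel_right h.1 hd (h.2.trans he.symm)

lemma ldiv_eq {a y b : P} (hd : defd a y) (he : padd a y = b) : ldiv a b = y := by
  have h : ∃ y : P, defd a y ∧ padd a y = b := ⟨y, hd, he⟩
  have hs : defd a (ldiv a b) ∧ padd a (ldiv a b) = b := Classical.epsilon_spec h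
  exact pea_cancel_left hs.1 hd (hs.2.trans he.symm)

lemma lcompl_spec (a : P) : defd (lcompl a) a ∧ padd (lcompl a) a = one := by
  obtain ⟨e, he, _⟩ := pe2_left a
  exact rsub_spec ⟨e, he⟩

lemma rcompl_spec (a : P) : defd a (rcompl a) ∧ padd a (rcompl a) = one := by
  obtain ⟨d, hd, _⟩ := pe2_right a
  have h : ∃ y : P, defd a y ∧ padd a y = one := ⟨d, hd⟩
  exact Classical.epsilon_spec h

lemma lcompl_eq {x a : P} (hd : defd x a) (he : padd x a = one) : lcompl a = x :=
  rsub_eq hd he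

lemma rcompl_eq {a y : P} (hd : defd a y) (he : padd a y = one) : rcompl a = y :=
  ldiv_eq hd he

lemma rcompl_lcompl (a : P) : rcompl (lcompl a) = a :=
  rcompl_eq (lcompl_spec a).1 (lcompl_spec a).2

lemma lcompl_rcompl (a : P) : lcompl (rcompl a) = a :=
  lcompl_eq (rcompl_spec a).1 (rcompl_spec a).2

lemma ple_iff' {a b : P} : ple a b ↔ ∃ d : P, defd a d ∧ padd a d = b := by
  constructor
  · rintro ⟨c, hc, he⟩
    obtain ⟨d, e, _, hde, _, h2⟩ := pe3 c a hc
    exact ⟨e, hde, by rw [← h2, he]⟩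
  · rintro ⟨d, hd, he⟩
    obtain ⟨d', e', hd', _, h1, _⟩ := pe3 a d hd
    exact ⟨d', hd', by rw [← h1, he]⟩

lemma lcompl_ple {a b : P} (h : ple a b) : ple (lcompl b) (lcompl a) := by
  obtain ⟨c, hc, he⟩ := h
  have hb := lcompl_spec b
  have hd : defd (lcompl b) (padd c a) := he ▸ hb.1
  have h2 := (pe1_defined (lcompl b) c a).mpr ⟨hc, hd⟩
  have hone : padd (padd (lcompl b) c) a = one := by
    rw [pe1_assoc _ _ _ h2.1 h2.2, he, hb.2]
  have hla : lcompl a = padd (lcompl b) c := lcompl_eq h2.2 hone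
  exact ple_iff'.mpr ⟨c, h2.1, hla.symm⟩

lemma rcompl_ple {a b : P} (h : ple a b) : ple (rcompl b) (rcompl a) := by
  obtain ⟨d, hd, he⟩ := ple_iff'.mp h
  have hb := rcompl_spec b
  have hd' : defd (padd a d) (rcompl b) := he ▸ hb.1
  have h2 := (pe1_defined a d (rcompl b)).mp ⟨hd, hd'⟩
  have hone : padd a (padd d (rcompl b)) = one := by
    rw [← pe1_assoc _ _ _ hd hd', he, hb.2]
  have hra : rcompl a = padd d (rcompl b) := rcompl_eq h2.2 hone
  exact ⟨d, h2.1, hra.symm⟩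

end Aux

section AuxLattice

variable {P : Type*} [LatticePseudoEffectAlgebra P]

lemma le_ple {a b : P} : a ≤ b ↔ ple a b := LatticePseudoEffectAlgebra.le_iff a b

lemma lcompl_le_lcompl {a b : P} (h : a ≤ b) : lcompl b ≤ lcompl a :=
  le_ple.mpr (lcompl_ple (le_ple.mp h))

lemma rcompl_le_rcompl {a b : P} (h : a ≤ b) : rcompl b ≤ rcompl a :=
  le_ple.mpr (rcompl_ple (le_ple.mp h))

lemma lcompl_sup (a b : P) : lcompl (a ⊔ b) = lcompl a ⊓ lcompl b := by
  apply le_antisymm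
  · exact le_inf (lcompl_le_lcompl le_sup_left) (lcompl_le_lcompl le_sup_right)
  · have h1 : a ≤ rcompl (lcompl a ⊓ lcompl b) := by
      have := rcompl_le_rcompl (inf_le_left (a := lcompl a) (b := lcompl b))
      rwa [rcompl_lcompl] at this
    have h2 : b ≤ rcompl (lcompl a ⊓ lcompl b) := by
      have := rcompl_le_rcompl (inf_le_right (a := lcompl a) (b := lcompl b))
      rwa [rcompl_lcompl] at this
    have h3 := lcompl_le_lcompl (sup_le h1 h2)
    rwa [lcompl_rcompl] at h3

lemma ldiv_lcompl {a c : P} (h : a ≤ c) : ldiv (lcompl c) (lcompl a) = rsub c a := by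
  have hs := rsub_spec (le_ple.mp h)
  have hc := lcompl_spec c
  have hd : defd (lcompl c) (padd (rsub c a) a) := by rw [hs.2]; exact hc.1
  have h2 := (pe1_defined (lcompl c) (rsub c a) a).mpr ⟨hs.1, hd⟩
  have hone : padd (padd (lcompl c) (rsub c a)) a = one := by
    rw [pe1_assoc _ _ _ h2.1 h2.2, hs.2, hc.2]
  exact ldiv_eq h2.1 (lcompl_eq h2.2 hone).symm

end AuxLattice

/-- Theorem 4.5: two elements of a lattice pseudo-effect algebra are compatible iff they
pseudocommute. -/
theorem compatible_iff_pseudocommute {P : Type*} [LatticePseudoEffectAlgebra P] (a b : P) :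
    (rsub (a ⊔ b) a = rsub b (a ⊓ b) ∧ rsub (a ⊔ b) b = rsub a (a ⊓ b)) ↔
    (scstar b (lcompl a) = scirc (lcompl a) b ∧ scstar a (lcompl b) = scirc (lcompl b) a) := by
  have e1 : scstar b (lcompl a) = rsub b (a ⊓ b) := by
    rw [scstar, rcompl_lcompl, inf_comm b a]
  have e2 : scirc (lcompl a) b = rsub (a ⊔ b) a := by
    rw [scirc, ← lcompl_sup, ldiv_lcompl le_sup_left]
  have e3 : scstar a (lcompl b) = rsub a (a ⊓ b) := by
    rw [scstar, rcompl_lcompl]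
  have e4 : scirc (lcompl b) a = rsub (a ⊔ b) b := by
    rw [scirc, ← lcompl_sup, ldiv_lcompl le_sup_left, sup_comm b a]
  rw [e1, e2, e3, e4]
  exact and_congr eq_comm eq_comm
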